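/- Let λ ≥ 0 and let x, y, z₁, z₂ : ℝ → ℝ be differentiable functions of β satisfying ż₂ = z₂ (i.e. z₂(β) = λe^β), taking values in the set U for every β (that is, 0 ≤ x(β) < 1, y(β) ≥ 0, z₁(β) ≥ 0, z₂(β) ≥ 0, z₁(β) + z₂(β) ≤ 1). Suppose that for all β: ẋ(3x + y - z₁ - z₂ - 2) + 2(ẏ - ż₁ - z₂)(1 - x) ≤ -½·u(x, y, z₁, z₂), and that x(β), y(β), z₁(β), z₂(β) all tend to 0 as β → -∞. Then for every β: x(β) ≤ (4 - 3z₁(β) - 3z₂(β))/9 + (4/9)·√(1 + 3z₁(β) + 3z₂(β)). -/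

import Mathlib

/-!
Along a solution, `w = (4 - 3x + y - z₁ - z₂)² / (1 - x)` has derivative
`(4 - 3x + y - z₁ - z₂) · L / (1 - x)²`, where `L` is the left-hand side of the differential
inequality, so `w' ≤ 0` wherever `u ≥ 0`. Since `u ≥ 0` whenever `w ≥ 16`, and `w → 16` as
`β → -∞`, the function `w` can never exceed `16`. With `y ≥ 0` this gives
`(4 - 3x - z₁ - z₂)² ≤ 16 (1 - x)`, and the bound is the larger root of this quadratic
in `x`.
-/

open Set

noncomputable section

/-- The quantity `u` from the dimensionless formulation of the compactness bound. -/
def u (x y z₁ z₂ : ℝ) : ℝ :=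
  3 * x ^ 2 + (y - z₁ - z₂) ^ 2 - 2 * (x - y) - 2 * (z₂ * (4 * x - 3) + z₁)

open Filter Topology

theorem le_of_tendsto_atBot_of_hasDerivAt_nonpos {f f' : ℝ → ℝ} {L : ℝ}
    (hf : ∀ x, HasDerivAt f (f' x) x) (hlim : Tendsto f atBot (𝓝 L))
    (hf' : ∀ x, L < f x → f' x ≤ 0) (b : ℝ) : f b ≤ L := by
  refine le_of_forall_gt_imp_ge_of_dense fun c' hc' => ?_
  obtain ⟨c, hLc, hcc'⟩ := exists_between hc'
  obtain ⟨a, hfa, hab⟩ : ∃ a, f a < c ∧ a < b :=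
    ((hlim.eventually (gt_mem_nhds hLc)).and (eventually_lt_atBot b)).exists
  -- the fencing theorem needs a strict inequality, hence a barrier of small positive slope
  set ε := (c' - c) / (b - a)
  have hε : 0 < ε := div_pos (sub_pos.2 hcc') (sub_pos.2 hab)
  have hB : ∀ x, HasDerivAt (fun x => c + ε * (x - a)) ε x := fun x => by
    simpa using (((hasDerivAt_id x).sub_const a).const_mul ε).const_add c
  have hbarrier : ∀ x ∈ Ico a b, f x = c + ε * (x - a) → f' x < ε := fun x hx hfx =>
    (hf' x <| hfx ▸ lt_add_of_lt_of_nonneg hLc (mul_nonneg hε.le (sub_nonneg.2 hx.1))).trans_lt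
      hε
  calc f b ≤ c + ε * (b - a) :=
        image_le_of_deriv_right_lt_deriv_boundary
          (fun x _ => (hf x).continuousAt.continuousWithinAt)
          (fun x _ => (hf x).hasDerivWithinAt) (by simpa using hfa.le) hB hbarrier
          (right_mem_Icc.2 hab.le)
    _ = c' := by rw [div_mul_cancel₀ _ (sub_ne_zero.2 hab.ne')]; ring

/-- Only meaningful for `x < 1`: at `x = 1` the division returns the junk value `0`. -/
def w (x y z₁ z₂ : ℝ) : ℝ := (4 - 3 * x + y - z₁ - z₂) ^ 2 / (1 - x)

theorem hasDerivAt_w {x y z₁ z₂ : ℝ → ℝ} {x' y' z₁' z₂' β : ℝ}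
    (hx : HasDerivAt x x' β) (hy : HasDerivAt y y' β) (hz₁ : HasDerivAt z₁ z₁' β)
    (hz₂ : HasDerivAt z₂ z₂' β) (hx1 : x β ≠ 1) :
    HasDerivAt (fun β => w (x β) (y β) (z₁ β) (z₂ β))
      ((4 - 3 * x β + y β - z₁ β - z₂ β) * (x' * (3 * x β + y β - z₁ β - z₂ β - 2)
        + 2 * (y' - z₁' - z₂') * (1 - x β)) / (1 - x β) ^ 2) β := by
  have hN : HasDerivAt (fun β => 4 - 3 * x β + y β - z₁ β - z₂ β)
      (-(3 * x') + y' - z₁' - z₂') β :=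
    (((hx.const_mul 3).const_sub 4).add hy).sub hz₁ |>.sub hz₂
  refine ((hN.fun_pow 2).fun_div (hx.const_sub 1) (sub_ne_zero.2 (Ne.symm hx1))).congr_deriv ?_
  ring

theorem tendsto_w {α : Type*} {l : Filter α} {x y z₁ z₂ : α → ℝ}
    (hx : Tendsto x l (𝓝 0)) (hy : Tendsto y l (𝓝 0)) (hz₁ : Tendsto z₁ l (𝓝 0))
    (hz₂ : Tendsto z₂ l (𝓝 0)) :
    Tendsto (fun a => w (x a) (y a) (z₁ a) (z₂ a)) l (𝓝 16) := by
  have hN := ((((hx.const_mul 3).const_sub 4).add hy).sub hz₁).sub hz₂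
  have hw := (hN.pow 2).div (hx.const_sub 1) (by norm_num)
  norm_num at hw
  exact hw

theorem u_nonneg_of_sixteen_le_w {x y z₁ z₂ : ℝ} (hx1 : x < 1) (hz₂ : 0 ≤ z₂)
    (h : 16 ≤ w x y z₁ z₂) : 0 ≤ u x y z₁ z₂ := by
  have hd : 0 < 1 - x := by linarith
  rw [w, le_div_iff₀ hd] at h
  set a := y - z₁ - z₂ + 1
  set d := 1 - x
  have ha : 4 * d - 3 * d ^ 2 ≤ a ^ 2 := by
    by_contra! hlt
    have had : 2 - d < a := by
      have : 0 < d * (a - (2 - d)) := by nlinarith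
      linarith [(pos_iff_pos_of_mul_pos this).1 hd]
    -- then `(2 - d)² < a² < 4d - 3d²`, that is `4 (1 - d)² < 0`
    nlinarith [sq_nonneg (1 - d)]
  have hu : u x y z₁ z₂ = a ^ 2 - (4 * d - 3 * d ^ 2) + 8 * z₂ * d := by
    simp only [u, a, d]; ring
  nlinarith [mul_nonneg hz₂ hd.le]

theorem le_of_w_le_sixteen {x y z₁ z₂ : ℝ} (hx1 : x < 1) (hy : 0 ≤ y)
    (hz0 : 0 ≤ z₁ + z₂) (hz1 : z₁ + z₂ ≤ 1) (h : w x y z₁ z₂ ≤ 16) :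
    x ≤ (4 - 3 * z₁ - 3 * z₂) / 9 + (4 / 9) * √(1 + 3 * z₁ + 3 * z₂) := by
  rw [w, div_le_iff₀ (sub_pos.2 hx1)] at h
  have hq : (4 - 3 * x - z₁ - z₂) ^ 2 ≤ 16 * (1 - x) :=
    (pow_le_pow_left₀ (by linarith) (by linarith) 2).trans h
  set r := √(1 + 3 * z₁ + 3 * z₂)
  have hr0 : 0 ≤ r := Real.sqrt_nonneg _
  have hr : r ^ 2 = 1 + 3 * z₁ + 3 * z₂ := Real.sq_sqrt (by linarith)
  by_contra! hlt
  have h₁ : 0 < 9 * x - (4 - 3 * z₁ - 3 * z₂) - 4 * r := by linarith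
  have h₂ : 0 < 9 * x - (4 - 3 * z₁ - 3 * z₂) + 4 * r := by linarith
  nlinarith [mul_pos h₁ h₂]

theorem dimensionless_compactness_bound_general
    (x y z₁ z₂ : ℝ → ℝ)
    (hx : Differentiable ℝ x) (hy : Differentiable ℝ y)
    (hz₁ : Differentiable ℝ z₁) (hz₂ : Differentiable ℝ z₂)
    (hz₂' : ∀ β, deriv z₂ β = z₂ β)
    (hU : ∀ β, 0 ≤ x β ∧ x β < 1 ∧ 0 ≤ y β ∧ 0 ≤ z₁ β ∧ 0 ≤ z₂ β ∧
      z₁ β + z₂ β ≤ 1)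
    (hineq : ∀ β, deriv x β * (3 * x β + y β - z₁ β - z₂ β - 2)
        + 2 * (deriv y β - deriv z₁ β - z₂ β) * (1 - x β)
      ≤ -(1 / 2) * u (x β) (y β) (z₁ β) (z₂ β))
    (hx0 : Filter.Tendsto x Filter.atBot (nhds 0))
    (hy0 : Filter.Tendsto y Filter.atBot (nhds 0))
    (hz₁0 : Filter.Tendsto z₁ Filter.atBot (nhds 0))
    (hz₂0 : Filter.Tendsto z₂ Filter.atBot (nhds 0)) :
    ∀ β, x β ≤ (4 - 3 * z₁ β - 3 * z₂ β) / 9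
      + (4 / 9) * Real.sqrt (1 + 3 * z₁ β + 3 * z₂ β) := by
  have hw : ∀ β, w (x β) (y β) (z₁ β) (z₂ β) ≤ 16 := by
    refine le_of_tendsto_atBot_of_hasDerivAt_nonpos
      (fun β => hasDerivAt_w (hx β).hasDerivAt (hy β).hasDerivAt (hz₁ β).hasDerivAt
        ((hz₂ β).hasDerivAt.congr_deriv (hz₂' β)) (hU β).2.1.ne)
      (tendsto_w hx0 hy0 hz₁0 hz₂0) fun β hβ => ?_
    obtain ⟨-, hx1, hy, -, hz₂, hz⟩ := hU β
    have hu := u_nonneg_of_sixteen_le_w hx1 hz₂ hβ.le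
    exact div_nonpos_of_nonpos_of_nonneg
      (mul_nonpos_of_nonneg_of_nonpos (by linarith) (by linarith [hineq β])) (sq_nonneg _)
  intro β
  obtain ⟨-, hx1, hy, hz₁, hz₂, hz⟩ := hU β
  exact le_of_w_le_sixteen hx1 hy (add_nonneg hz₁ hz₂) hz (hw β)

theorem dimensionless_compactness_bound (lam : ℝ) (hlam : 0 ≤ lam)
    (x y z₁ z₂ : ℝ → ℝ)
    (hx : Differentiable ℝ x) (hy : Differentiable ℝ y)
    (hz₁ : Differentiable ℝ z₁) (hz₂ : Differentiable ℝ z₂)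
    (hz₂' : ∀ β, deriv z₂ β = z₂ β)
    (hz₂eq : ∀ β, z₂ β = lam * Real.exp β)
    (hU : ∀ β, 0 ≤ x β ∧ x β < 1 ∧ 0 ≤ y β ∧ 0 ≤ z₁ β ∧ 0 ≤ z₂ β ∧
      z₁ β + z₂ β ≤ 1)
    (hineq : ∀ β, deriv x β * (3 * x β + y β - z₁ β - z₂ β - 2)
        + 2 * (deriv y β - deriv z₁ β - z₂ β) * (1 - x β)
      ≤ -(1 / 2) * u (x β) (y β) (z₁ β) (z₂ β))
    (hx0 : Filter.Tendsto x Filter.atBot (nhds 0))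
    (hy0 : Filter.Tendsto y Filter.atBot (nhds 0))
    (hz₁0 : Filter.Tendsto z₁ Filter.atBot (nhds 0))
    (hz₂0 : Filter.Tendsto z₂ Filter.atBot (nhds 0)) :
    ∀ β, x β ≤ (4 - 3 * z₁ β - 3 * z₂ β) / 9
      + (4 / 9) * Real.sqrt (1 + 3 * z₁ β + 3 * z₂ β) :=
  dimensionless_compactness_bound_general x y z₁ z₂ hx hy hz₁ hz₂ hz₂' hU hineq hx0 hy0 hz₁0 hz₂0
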